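/- A continuous map p : E → B has the weakly unique path homotopically lifting property (wuphl) if and only if for every point e ∈ E the induced homomorphism p₊ : π₁(E, e) → π₁(B, p(e)) on fundamental groups is injective. -/

import Mathlib

universe u

open scoped unitInterval

/-- `p` has the weakly unique path homotopically lifting property (wuphl). -/
def Wuphl {E B : Type*} [TopologicalSpace E] [TopologicalSpace B] (p : C(E, B)) : Prop :=
  ∀ α β : C(unitInterval, E), α 0 = β 0 → α 1 = β 1 →
    (p.comp α).HomotopicRel (p.comp β) {0, 1} →
    α.HomotopicRel β {0, 1}

/-- The homomorphism induced by a continuous map `p` on fundamental groups. -/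
noncomputable def inducedPi1Hom {E B : Type u} [TopologicalSpace E] [TopologicalSpace B]
    (p : C(E, B)) (e : E) :
    FundamentalGroup E e →* FundamentalGroup B (p e) :=
  CategoryTheory.Functor.mapEnd _
    (FundamentalGroupoid.fundamentalGroupoidFunctor.map
      (X := TopCat.of E) (Y := TopCat.of B) (TopCat.ofHom p))

/-! Wuphl says precisely that the functor `p` induces on fundamental groupoids is faithful. For a
functor out of a groupoid, faithfulness reduces to injectivity on vertex groups, because two
parallel arrows `f, g` are equal iff the loop `f ≫ g⁻¹` is trivial. -/

open CategoryTheory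

theorem CategoryTheory.Functor.faithful_iff_mapEnd_injective {C D : Type*} [Groupoid C]
    [Category D] (F : C ⥤ D) : F.Faithful ↔ ∀ x : C, Function.Injective (F.mapEnd x) := by
  refine ⟨fun _ x => F.map_injective, fun h => ⟨fun {x y} f g hfg => ?_⟩⟩
  have hloop : F.mapEnd x (f ≫ Groupoid.inv g) = F.mapEnd x (𝟙 x) := by
    change F.map (f ≫ Groupoid.inv g) = F.map (𝟙 x)
    rw [Groupoid.inv_eq_inv, F.map_comp, F.map_inv, hfg, IsIso.hom_inv_id, F.map_id]
  have hid : f ≫ CategoryTheory.inv g = 𝟙 x := by simpa only [Groupoid.inv_eq_inv] using h x hloop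
  exact (comp_inv_eq_id g).mp hid

theorem wuphl_iff_homotopic_of_homotopic_map {E B : Type*} [TopologicalSpace E]
    [TopologicalSpace B] (p : C(E, B)) :
    Wuphl p ↔ ∀ {x y : E} (γ δ : Path x y),
      (γ.map p.continuous).Homotopic (δ.map p.continuous) → γ.Homotopic δ := by
  constructor
  · intro hp x y γ δ
    exact hp γ.toContinuousMap δ.toContinuousMap (γ.source.trans δ.source.symm)
      (γ.target.trans δ.target.symm)
  · intro hp α β h0 h1
    exact hp (x := α 0) (y := α 1) ⟨α, rfl, rfl⟩ ⟨β, h0.symm, h1.symm⟩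

theorem wuphl_iff_faithful {E B : Type*} [TopologicalSpace E] [TopologicalSpace B]
    (p : C(E, B)) : Wuphl p ↔ (FundamentalGroupoid.map p).Faithful := by
  rw [wuphl_iff_homotopic_of_homotopic_map]
  refine ⟨fun hp => ⟨fun {x y} => ?_⟩, fun hF x y γ δ h => ?_⟩
  · rintro ⟨γ⟩ ⟨δ⟩ h
    exact Quotient.sound (hp γ δ (Quotient.exact h))
  · have hmap : (FundamentalGroupoid.map p).map (X := ⟨x⟩) (Y := ⟨y⟩) (.mk γ) =
        (FundamentalGroupoid.map p).map (.mk δ) :=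
      Path.Homotopic.Quotient.eq.mpr h
    exact Path.Homotopic.Quotient.eq.mp ((FundamentalGroupoid.map p).map_injective hmap)

theorem wuphl_iff_pi1_injective {E B : Type u} [TopologicalSpace E] [TopologicalSpace B]
    (p : C(E, B)) :
    Wuphl p ↔ ∀ e : E, Function.Injective (inducedPi1Hom p e) := by
  rw [wuphl_iff_faithful, Functor.faithful_iff_mapEnd_injective]
  exact ⟨fun h e => h ⟨e⟩, fun h x => h x.as⟩
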